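/- For all integers q ≥ 2 and n ≥ 1, the family 𝓖_q is n-cell implementable under scenario (∗∗) if and only if q ≤ 2n when n ∈ {1, 2}, and q ≤ 2n + 1 when n ≥ 3. -/

import Mathlib

/-- The alphabet 𝔹• = {0, 1, ∗, •}. -/
inductive BB : Type
  | zero
  | one
  | star
  | reject
deriving DecidableEq

instance instFintypeBB : Fintype BB :=
  ⟨{BB.zero, BB.one, BB.star, BB.reject}, fun x => by cases x <;> simp⟩

/-- The cell function T : 𝔹• × 𝔹• → 𝔹: T(u,ϑ) = 1 iff u = ∗, or ϑ = ∗,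
or u,ϑ ∈ 𝔹 with u = ϑ. -/
def Tcell : BB → BB → Bool
  | BB.star, _ => true
  | _, BB.star => true
  | BB.zero, BB.zero => true
  | BB.one, BB.one => true
  | _, _ => false

/-- The word-level function T(u,ϑ) = ⋀_{j<n} T(u_j, ϑ_j). -/
def Tword {n : ℕ} (u θ : Fin n → BB) : Bool :=
  decide (∀ j, Tcell (u j) (θ j) = true)

/-- The alphabet 𝔹 = {0,1} ⊆ 𝔹•. -/
def Bcirc : Set BB := {BB.zero, BB.one}

/-- The alphabet 𝔹∗ = {0,1,∗} ⊆ 𝔹•. -/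
def Bstar : Set BB := {BB.zero, BB.one, BB.star}

/-- The full alphabet 𝔹•. -/
def Bdot : Set BB := Set.univ

/-- A family Φ of functions {0,…,q−1} → 𝔹 is n-cell implementable under
scenario (A,B) if there are mappings u : {0,…,q−1} → A^n and ϑ : Φ → B^n
with f(x) = T(u(x), ϑ(f)) for all f ∈ Φ and x. -/
def Implementable (A B : Set BB) (n q : ℕ) (Φ : Set (Fin q → Bool)) : Prop :=
  ∃ u : Fin q → Fin n → BB, ∃ θ : (Fin q → Bool) → Fin n → BB,
    (∀ x j, u x j ∈ A) ∧ (∀ f ∈ Φ, ∀ j, θ f j ∈ B) ∧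
    (∀ f ∈ Φ, ∀ x, f x = Tword (u x) (θ f))

/-- The family 𝓔_q = { x ↦ [x = t] : t ∈ [q⟩ }. -/
def Eset (q : ℕ) : Set (Fin q → Bool) :=
  { f | ∃ t : Fin q, f = fun x => decide (x = t) }

/-- The family 𝓝_q = { x ↦ [x ≠ t] : t ∈ [q⟩ }. -/
def Nset (q : ℕ) : Set (Fin q → Bool) :=
  { f | ∃ t : Fin q, f = fun x => decide (x ≠ t) }

/-- The family 𝓖_q = { x ↦ [x ≥ t] : t ∈ [q⟩ }. -/
def Gset (q : ℕ) : Set (Fin q → Bool) :=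
  { f | ∃ t : Fin q, f = fun x => decide (t ≤ x) }

/-- The family 𝓛_q = { x ↦ [x ≤ t] : t ∈ [q⟩ }. -/
def Lset (q : ℕ) : Set (Fin q → Bool) :=
  { f | ∃ t : Fin q, f = fun x => decide (x ≤ t) }

/-! ### Auxiliary definitions and lemmas -/

def BBflip : BB → BB
  | BB.zero => BB.one
  | BB.one => BB.zero
  | x => x

lemma Tcell_star_right (a : BB) : Tcell a BB.star = true := by cases a <;> rfl

lemma Tcell_star_left (c : BB) : Tcell BB.star c = true := by cases c <;> rfl

lemma tcell_false_iff {a c : BB} (ha : a ∈ Bstar) (hc : c ∈ Bstar)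
    (h : Tcell a c = false) : (a = BB.zero ∨ a = BB.one) ∧ c = BBflip a := by
  simp only [Bstar, Set.mem_insert_iff, Set.mem_singleton_iff] at ha hc
  rcases ha with rfl | rfl | rfl <;> rcases hc with rfl | rfl | rfl <;>
    simp_all [Tcell, BBflip]

lemma Tcell_flip_false {a : BB} (ha : a = BB.zero ∨ a = BB.one) :
    Tcell a (BBflip a) = false := by rcases ha with rfl | rfl <;> rfl

lemma BBflip_inj {a b : BB} (ha : a = BB.zero ∨ a = BB.one)
    (hb : b = BB.zero ∨ b = BB.one) (h : BBflip a = BBflip b) : a = b := by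
  rcases ha with rfl | rfl <;> rcases hb with rfl | rfl <;> simp_all [BBflip]

lemma star_mem_Bstar : BB.star ∈ Bstar := by simp [Bstar]

/-- ℕ-phrased reformulation of implementability of `Gset q`. -/
def NatImpl (n q : ℕ) : Prop :=
  ∃ u σ : ℕ → ℕ → BB,
    (∀ x j, u x j ∈ Bstar) ∧ (∀ t j, σ t j ∈ Bstar) ∧
    ∀ t x, t < q → x < q →
      (t ≤ x ↔ ∀ j, j < n → Tcell (u x j) (σ t j) = true)

lemma natImpl_mono {n q q' : ℕ} (h : q' ≤ q) (hI : NatImpl n q) : NatImpl n q' := by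
  obtain ⟨u, σ, hu, hσ, hm⟩ := hI
  exact ⟨u, σ, hu, hσ, fun t x ht hx => hm t x (lt_of_lt_of_le ht h) (lt_of_lt_of_le hx h)⟩
lemma natImpl_iff (n q : ℕ) :
    Implementable Bstar Bstar n q (Gset q) ↔ NatImpl n q := by
  constructor
  · rintro ⟨U, θ, hU, hθ, hEq⟩
    refine ⟨fun x j => if h : x < q ∧ j < n then U ⟨x, h.1⟩ ⟨j, h.2⟩ else BB.star,
      fun t j => if h : t < q ∧ j < n then
        θ (fun y => decide ((⟨t, h.1⟩ : Fin q) ≤ y)) ⟨j, h.2⟩ else BB.star,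
      ?_, ?_, ?_⟩
    · intro x j
      dsimp only
      by_cases h : x < q ∧ j < n
      · rw [dif_pos h]; exact hU _ _
      · rw [dif_neg h]; exact star_mem_Bstar
    · intro t j
      dsimp only
      by_cases h : t < q ∧ j < n
      · rw [dif_pos h]; exact hθ _ ⟨⟨t, h.1⟩, rfl⟩ _
      · rw [dif_neg h]; exact star_mem_Bstar
    · intro t x ht hx
      have key := hEq (fun y => decide ((⟨t, ht⟩ : Fin q) ≤ y)) ⟨⟨t, ht⟩, rfl⟩ ⟨x, hx⟩
      constructor
      · intro hle j hj
        dsimp only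
        rw [dif_pos (⟨hx, hj⟩ : x < q ∧ j < n), dif_pos (⟨ht, hj⟩ : t < q ∧ j < n)]
        have h2 : Tword (U ⟨x, hx⟩) (θ (fun y => decide ((⟨t, ht⟩ : Fin q) ≤ y))) = true := by
          rw [← key]; exact decide_eq_true hle
        rw [Tword] at h2
        exact of_decide_eq_true h2 ⟨j, hj⟩
      · intro hall
        have h2 : Tword (U ⟨x, hx⟩) (θ (fun y => decide ((⟨t, ht⟩ : Fin q) ≤ y))) = true := by
          rw [Tword]
          apply decide_eq_true
          intro j
          have hh := hall j.val j.isLt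
          dsimp only at hh
          rw [dif_pos (⟨hx, j.isLt⟩ : x < q ∧ j.val < n),
            dif_pos (⟨ht, j.isLt⟩ : t < q ∧ j.val < n)] at hh
          exact hh
        have h3 := key.trans h2
        exact of_decide_eq_true h3
  · rintro ⟨u, σ, hu, hσ, hmain⟩
    classical
    refine ⟨fun x j => u x.val j.val,
      fun f => if h : ∃ t : Fin q, f = fun x => decide (t ≤ x) then
        (fun j => σ h.choose.val j.val) else fun _ => BB.star,
      fun x j => hu _ _, ?_, ?_⟩
    · intro f hf j
      have hf' : ∃ t : Fin q, f = fun x => decide (t ≤ x) := hf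
      dsimp only
      rw [dif_pos hf']
      exact hσ _ _
    · intro f hf x
      have hf' : ∃ t : Fin q, f = fun x => decide (t ≤ x) := hf
      dsimp only
      rw [dif_pos hf']
      conv_lhs => rw [hf'.choose_spec]
      rw [Tword, decide_eq_decide]
      constructor
      · intro hle j
        exact (hmain _ x.val hf'.choose.isLt x.isLt).mp hle j.val j.isLt
      · intro hall
        exact (hmain _ x.val hf'.choose.isLt x.isLt).mpr (fun j hj => hall ⟨j, hj⟩)
lemma natImpl_le (n q : ℕ) (h : NatImpl n q) : q ≤ 2 * n + 1 := by
  by_contra hlt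
  push_neg at hlt
  obtain ⟨u, σ, hu, hσ, hmain⟩ := h
  -- for every t < 2n+1 some cell kills x = t at threshold t+1
  have hrej : ∀ t : ℕ, ∃ j : ℕ, t < 2 * n + 1 →
      j < n ∧ Tcell (u t j) (σ (t + 1) j) = false := by
    intro t
    by_cases ht : t < 2 * n + 1
    · have h1 : ¬ (t + 1 ≤ t) := by omega
      have h2 := hmain (t + 1) t (by omega) (by omega)
      have hex : ∃ j, j < n ∧ Tcell (u t j) (σ (t + 1) j) = false := by
        by_contra hc
        push_neg at hc
        refine h1 (h2.mpr ?_)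
        intro j hj
        exact Bool.ne_false_iff.mp (hc j hj)
      obtain ⟨j, hj1, hj2⟩ := hex
      exact ⟨j, fun _ => ⟨hj1, hj2⟩⟩
    · exact ⟨0, fun h => absurd h ht⟩
  choose jf hjf using hrej
  set f : ℕ → ℕ × Bool := fun t => (jf t, u t (jf t) == BB.one) with hf
  have hmaps : ∀ t ∈ Finset.range (2 * n + 1),
      f t ∈ Finset.range n ×ˢ (Finset.univ : Finset Bool) := by
    intro t ht
    simp only [Finset.mem_range] at ht
    simp only [Finset.mem_product, Finset.mem_range, Finset.mem_univ, and_true, hf]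
    exact (hjf t ht).1
  have hinj : Set.InjOn f (Finset.range (2 * n + 1)) := by
    have key : ∀ a b : ℕ, a < b → b < 2 * n + 1 → f a ≠ f b := by
      intro a b hab hb hfe
      obtain ⟨hja, hka⟩ := hjf a (by omega)
      obtain ⟨hjb, hkb⟩ := hjf b (by omega)
      have hpa := tcell_false_iff (hu a (jf a)) (hσ (a + 1) (jf a)) hka
      have hpb := tcell_false_iff (hu b (jf b)) (hσ (b + 1) (jf b)) hkb
      have hj : jf a = jf b := congrArg Prod.fst hfe
      have hbeq : (u a (jf a) == BB.one) = (u b (jf b) == BB.one) :=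
        congrArg Prod.snd hfe
      have hueq : u a (jf a) = u b (jf b) := by
        rcases hpa.1 with h1 | h1 <;> rcases hpb.1 with h2 | h2 <;>
          simp_all
      rw [← hj] at hueq
      -- acceptance of x = b at threshold a+1
      have hacc := (hmain (a + 1) b (by omega) (by omega)).mp (by omega) (jf a) hja
      rw [hpa.2, ← hueq] at hacc
      rw [Tcell_flip_false hpa.1] at hacc
      exact Bool.noConfusion hacc
    intro a ha b hb hfe
    simp only [Finset.coe_range, Set.mem_Iio] at ha hb
    rcases lt_trichotomy a b with h | h | h
    · exact absurd hfe (key a b h hb)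
    · exact h
    · exact absurd hfe.symm (key b a h ha)
  have hcard := Finset.card_le_card_of_injOn f hmaps hinj
  simp only [Finset.card_range, Finset.card_product, Finset.card_univ,
    Fintype.card_bool] at hcard
  omega
lemma natImpl_1_2 : NatImpl 1 2 := by
  refine ⟨fun x _ => if x = 0 then BB.zero else BB.one,
    fun t _ => if t = 0 then BB.star else BB.one, ?_, ?_, ?_⟩
  · intro x j; dsimp only; split <;> simp [Bstar]
  · intro t j; dsimp only; split <;> simp [Bstar]
  · intro t x ht hx
    interval_cases t <;> interval_cases x <;>
      simp [Tcell, Nat.lt_one_iff]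
lemma natImpl_2_4 : NatImpl 2 4 := by
  refine ⟨fun x j => if j = 0 then (if x ≤ 1 then BB.zero else BB.one)
      else (if x = 0 then BB.zero else if x ≤ 2 then BB.one else BB.star),
    fun t j => if j = 0 then (if t ≤ 1 then BB.star else BB.one)
      else (if t = 1 then BB.one else if t = 3 then BB.zero else BB.star),
    ?_, ?_, ?_⟩
  · intro x j; dsimp only; split_ifs <;> simp [Bstar]
  · intro t j; dsimp only; split_ifs <;> simp [Bstar]
  · intro t x ht hx
    interval_cases t <;> interval_cases x <;>
      simp [Tcell, Nat.lt_succ_iff, Nat.le_one_iff_eq_zero_or_eq_one]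
/-- Columns of the general construction for `q = 2n+1`. -/
def Ugen (n x j : ℕ) : BB :=
  if x < j + 1 then BB.zero else if x < n + j + 1 then BB.one else BB.star

/-- Queries of the general construction for `q = 2n+1`. -/
def Sgen (n t j : ℕ) : BB :=
  if t = 0 then BB.star
  else if t ≤ n then (if j + 1 = t then BB.one else BB.star)
  else if t ≤ 2 * n - 1 then
    (if j + 1 = t - n then BB.zero else if j + 1 = n then BB.one else BB.star)
  else (if j + 1 = n then BB.zero else if j + 1 = n - 1 then BB.one
        else if j + 1 = n - 2 then BB.zero else BB.star)

lemma natImpl_gen (n : ℕ) (hn : 3 ≤ n) : NatImpl n (2 * n + 1) := by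
  refine ⟨fun x j => Ugen n x j, fun t j => Sgen n t j, ?_, ?_, ?_⟩
  · intro x j; dsimp only; rw [Ugen]; split_ifs <;> simp [Bstar]
  · intro t j; dsimp only; rw [Sgen]; split_ifs <;> simp [Bstar]
  · intro t x ht hx
    dsimp only
    rcases Nat.eq_zero_or_pos t with rfl | htpos
    · simp only [Nat.zero_le, true_iff]
      intro j hj
      rw [Sgen, if_pos rfl]
      exact Tcell_star_right _
    by_cases h1 : t ≤ n
    · constructor
      · intro hle j hj
        rw [Sgen, if_neg (by omega), if_pos h1]
        by_cases hjt : j + 1 = t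
        · rw [if_pos hjt, Ugen, if_neg (by omega)]
          split_ifs <;> rfl
        · rw [if_neg hjt]; exact Tcell_star_right _
      · intro hall
        by_contra hxt
        push_neg at hxt
        have hh := hall (t - 1) (by omega)
        rw [Sgen, if_neg (by omega), if_pos h1, if_pos (by omega),
          Ugen, if_pos (by omega)] at hh
        exact Bool.noConfusion hh
    · by_cases h2 : t ≤ 2 * n - 1
      · constructor
        · intro hle j hj
          rw [Sgen, if_neg (by omega), if_neg h1, if_pos h2]
          by_cases hk : j + 1 = t - n
          · rw [if_pos hk, Ugen, if_neg (by omega), if_neg (by omega)]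
            rfl
          · rw [if_neg hk]
            by_cases hjn : j + 1 = n
            · rw [if_pos hjn, Ugen, if_neg (by omega)]
              split_ifs <;> rfl
            · rw [if_neg hjn]; exact Tcell_star_right _
        · intro hall
          by_contra hxt
          push_neg at hxt
          by_cases hxn : x < n
          · have hh := hall (n - 1) (by omega)
            rw [Sgen, if_neg (by omega), if_neg h1, if_pos h2,
              if_neg (by omega), if_pos (by omega), Ugen, if_pos (by omega)] at hh
            exact Bool.noConfusion hh
          · have hh := hall (t - n - 1) (by omega)
            rw [Sgen, if_neg (by omega), if_neg h1, if_pos h2,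
              if_pos (by omega), Ugen, if_neg (by omega), if_pos (by omega)] at hh
            exact Bool.noConfusion hh
      · have ht2 : t = 2 * n := by omega
        subst ht2
        constructor
        · intro hle j hj
          have hx2 : x = 2 * n := by omega
          subst hx2
          rw [Ugen, if_neg (by omega), if_neg (by omega)]
          exact Tcell_star_left _
        · intro hall
          by_contra hxt
          push_neg at hxt
          by_cases hxa : x < n - 1
          · have hh := hall (n - 2) (by omega)
            rw [Sgen, if_neg (by omega), if_neg h1, if_neg h2,
              if_neg (by omega), if_pos (by omega), Ugen, if_pos (by omega)] at hh
            exact Bool.noConfusion hh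
          · by_cases hxb : x < 2 * n - 2
            · have hh := hall (n - 3) (by omega)
              rw [Sgen, if_neg (by omega), if_neg h1, if_neg h2,
                if_neg (by omega), if_neg (by omega), if_pos (by omega),
                Ugen, if_neg (by omega), if_pos (by omega)] at hh
              exact Bool.noConfusion hh
            · have hh := hall (n - 1) (by omega)
              rw [Sgen, if_neg (by omega), if_neg h1, if_neg h2,
                if_pos (by omega), Ugen, if_neg (by omega), if_pos (by omega)] at hh
              exact Bool.noConfusion hh
lemma rej_of {n q : ℕ} {u σ : ℕ → ℕ → BB}
    (H : ∀ t x, t < q → x < q →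
      (t ≤ x ↔ ∀ j, j < n → Tcell (u x j) (σ t j) = true)) :
    ∀ t x, t < q → x < t → ∃ j, j < n ∧ Tcell (u x j) (σ t j) = false := by
  intro t x ht hx
  by_contra hc
  push_neg at hc
  have := (H t x ht (by omega)).mpr (fun j hj => Bool.ne_false_iff.mp (hc j hj))
  omega

lemma not_natImpl_1_3 : ¬ NatImpl 1 3 := by
  rintro ⟨u, σ, hu, hσ, H⟩
  have rej := rej_of H
  obtain ⟨j, hj, k20⟩ := rej 2 0 (by omega) (by omega)
  have hj0 : j = 0 := by omega
  subst hj0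
  obtain ⟨j, hj, k21⟩ := rej 2 1 (by omega) (by omega)
  have hj0 : j = 0 := by omega
  subst hj0
  have p0 := tcell_false_iff (hu 0 0) (hσ 2 0) k20
  have p1 := tcell_false_iff (hu 1 0) (hσ 2 0) k21
  have hueq : u 0 0 = u 1 0 := BBflip_inj p0.1 p1.1 (p0.2 ▸ p1.2 ▸ rfl)
  obtain ⟨j, hj, k10⟩ := rej 1 0 (by omega) (by omega)
  have hj0 : j = 0 := by omega
  subst hj0
  have q0 := tcell_false_iff (hu 0 0) (hσ 1 0) k10
  have hacc := (H 1 1 (by omega) (by omega)).mp (by omega) 0 (by omega)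
  rw [q0.2, ← hueq, Tcell_flip_false q0.1] at hacc
  exact Bool.noConfusion hacc

lemma pigeonBool (j0 j1 j2 j3 j : Bool) (b0 b1 b2 b3 l : BB)
    (hb0 : b0 = BB.zero ∨ b0 = BB.one) (hb1 : b1 = BB.zero ∨ b1 = BB.one)
    (hb2 : b2 = BB.zero ∨ b2 = BB.one) (hb3 : b3 = BB.zero ∨ b3 = BB.one)
    (hl : l = BB.zero ∨ l = BB.one)
    (d01 : j0 = j1 → b0 ≠ b1) (d02 : j0 = j2 → b0 ≠ b2)
    (d03 : j0 = j3 → b0 ≠ b3) (d12 : j1 = j2 → b1 ≠ b2)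
    (d13 : j1 = j3 → b1 ≠ b3) (d23 : j2 = j3 → b2 ≠ b3) :
    (j = j0 ∧ l = b0) ∨ (j = j1 ∧ l = b1) ∨ (j = j2 ∧ l = b2) ∨
      (j = j3 ∧ l = b3) := by
  revert d01 d02 d03 d12 d13 d23
  rcases hb0 with rfl | rfl <;> rcases hb1 with rfl | rfl <;>
    rcases hb2 with rfl | rfl <;> rcases hb3 with rfl | rfl <;>
    rcases hl with rfl | rfl <;> cases j0 <;> cases j1 <;> cases j2 <;>
    cases j3 <;> cases j <;> decide

lemma beq_one_eq_iff {a b : ℕ} (ha : a < 2) (hb : b < 2) :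
    ((a == 1) = (b == 1)) ↔ a = b := by
  interval_cases a <;> interval_cases b <;> simp

lemma pigeon (j0 j1 j2 j3 j : ℕ) (b0 b1 b2 b3 l : BB)
    (hj0 : j0 < 2) (hj1 : j1 < 2) (hj2 : j2 < 2) (hj3 : j3 < 2) (hj : j < 2)
    (hb0 : b0 = BB.zero ∨ b0 = BB.one) (hb1 : b1 = BB.zero ∨ b1 = BB.one)
    (hb2 : b2 = BB.zero ∨ b2 = BB.one) (hb3 : b3 = BB.zero ∨ b3 = BB.one)
    (hl : l = BB.zero ∨ l = BB.one)
    (d01 : j0 = j1 → b0 ≠ b1) (d02 : j0 = j2 → b0 ≠ b2)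
    (d03 : j0 = j3 → b0 ≠ b3) (d12 : j1 = j2 → b1 ≠ b2)
    (d13 : j1 = j3 → b1 ≠ b3) (d23 : j2 = j3 → b2 ≠ b3) :
    (j = j0 ∧ l = b0) ∨ (j = j1 ∧ l = b1) ∨ (j = j2 ∧ l = b2) ∨
      (j = j3 ∧ l = b3) := by
  have := pigeonBool (j0 == 1) (j1 == 1) (j2 == 1) (j3 == 1) (j == 1)
    b0 b1 b2 b3 l hb0 hb1 hb2 hb3 hl
    (fun h => d01 ((beq_one_eq_iff hj0 hj1).mp h))
    (fun h => d02 ((beq_one_eq_iff hj0 hj2).mp h))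
    (fun h => d03 ((beq_one_eq_iff hj0 hj3).mp h))
    (fun h => d12 ((beq_one_eq_iff hj1 hj2).mp h))
    (fun h => d13 ((beq_one_eq_iff hj1 hj3).mp h))
    (fun h => d23 ((beq_one_eq_iff hj2 hj3).mp h))
  rcases this with ⟨h, h'⟩ | ⟨h, h'⟩ | ⟨h, h'⟩ | ⟨h, h'⟩
  · exact Or.inl ⟨(beq_one_eq_iff hj hj0).mp h, h'⟩
  · exact Or.inr (Or.inl ⟨(beq_one_eq_iff hj hj1).mp h, h'⟩)
  · exact Or.inr (Or.inr (Or.inl ⟨(beq_one_eq_iff hj hj2).mp h, h'⟩))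
  · exact Or.inr (Or.inr (Or.inr ⟨(beq_one_eq_iff hj hj3).mp h, h'⟩))
lemma three_letters {a b c : BB} (ha : a = BB.zero ∨ a = BB.one)
    (hb : b = BB.zero ∨ b = BB.one) (hc : c = BB.zero ∨ c = BB.one)
    (hab : a ≠ b) (hac : a ≠ c) (hbc : b ≠ c) : False := by
  rcases ha with rfl | rfl <;> rcases hb with rfl | rfl <;>
    rcases hc with rfl | rfl <;> simp_all

lemma not_natImpl_2_5 : ¬ NatImpl 2 5 := by
  rintro ⟨u, σ, hu, hσ, H⟩
  have rej := rej_of H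
  have acc : ∀ t x j, t < 5 → x < 5 → t ≤ x → j < 2 →
      Tcell (u x j) (σ t j) = true :=
    fun t x j ht hx hle hj => (H t x ht hx).mp hle j hj
  obtain ⟨j0, hj0, k0⟩ := rej 1 0 (by omega) (by omega)
  obtain ⟨j1, hj1, k1⟩ := rej 2 1 (by omega) (by omega)
  obtain ⟨j2, hj2, k2⟩ := rej 3 2 (by omega) (by omega)
  obtain ⟨j3, hj3, k3⟩ := rej 4 3 (by omega) (by omega)
  have p0 := tcell_false_iff (hu 0 j0) (hσ 1 j0) k0
  have p1 := tcell_false_iff (hu 1 j1) (hσ 2 j1) k1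
  have p2 := tcell_false_iff (hu 2 j2) (hσ 3 j2) k2
  have p3 := tcell_false_iff (hu 3 j3) (hσ 4 j3) k3
  have F2 : ∀ t j x, t + 1 < 5 → j < 2 → σ (t + 1) j = BBflip (u t j) →
      (u t j = BB.zero ∨ u t j = BB.one) → t < x → x < 5 → u x j ≠ u t j := by
    intro t j x h5 hj hs hb hlt hx heq
    have ha := acc (t + 1) x j h5 hx (by omega) hj
    rw [heq, hs, Tcell_flip_false hb] at ha
    exact Bool.noConfusion ha
  have d01 : j0 = j1 → u 0 j0 ≠ u 1 j1 := fun hj heq =>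
    F2 0 j0 1 (by omega) hj0 p0.2 p0.1 (by omega) (by omega)
      ((congrArg (u 1) hj).trans heq.symm)
  have d02 : j0 = j2 → u 0 j0 ≠ u 2 j2 := fun hj heq =>
    F2 0 j0 2 (by omega) hj0 p0.2 p0.1 (by omega) (by omega)
      ((congrArg (u 2) hj).trans heq.symm)
  have d03 : j0 = j3 → u 0 j0 ≠ u 3 j3 := fun hj heq =>
    F2 0 j0 3 (by omega) hj0 p0.2 p0.1 (by omega) (by omega)
      ((congrArg (u 3) hj).trans heq.symm)
  have d12 : j1 = j2 → u 1 j1 ≠ u 2 j2 := fun hj heq =>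
    F2 1 j1 2 (by omega) hj1 p1.2 p1.1 (by omega) (by omega)
      ((congrArg (u 2) hj).trans heq.symm)
  have d13 : j1 = j3 → u 1 j1 ≠ u 3 j3 := fun hj heq =>
    F2 1 j1 3 (by omega) hj1 p1.2 p1.1 (by omega) (by omega)
      ((congrArg (u 3) hj).trans heq.symm)
  have d23 : j2 = j3 → u 2 j2 ≠ u 3 j3 := fun hj heq =>
    F2 2 j2 3 (by omega) hj2 p2.2 p2.1 (by omega) (by omega)
      ((congrArg (u 3) hj).trans heq.symm)
  have COV : ∀ s x, s < 5 → x < s →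
      (σ s j0 = BBflip (u 0 j0) ∧ u x j0 = u 0 j0) ∨
      (σ s j1 = BBflip (u 1 j1) ∧ u x j1 = u 1 j1) ∨
      (σ s j2 = BBflip (u 2 j2) ∧ u x j2 = u 2 j2) ∨
      (σ s j3 = BBflip (u 3 j3) ∧ u x j3 = u 3 j3) := by
    intro s x hs hx
    obtain ⟨j, hj, hk⟩ := rej s x hs hx
    have hp := tcell_false_iff (hu x j) (hσ s j) hk
    have hpg := pigeon j0 j1 j2 j3 j (u 0 j0) (u 1 j1) (u 2 j2) (u 3 j3) (u x j)
      hj0 hj1 hj2 hj3 hj p0.1 p1.1 p2.1 p3.1 hp.1 d01 d02 d03 d12 d13 d23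
    rcases hpg with ⟨he, hb⟩ | ⟨he, hb⟩ | ⟨he, hb⟩ | ⟨he, hb⟩
    · subst he; exact Or.inl ⟨by rw [← hb]; exact hp.2, hb⟩
    · subst he; exact Or.inr (Or.inl ⟨by rw [← hb]; exact hp.2, hb⟩)
    · subst he; exact Or.inr (Or.inr (Or.inl ⟨by rw [← hb]; exact hp.2, hb⟩))
    · subst he; exact Or.inr (Or.inr (Or.inr ⟨by rw [← hb]; exact hp.2, hb⟩))
  have ACT : ∀ t j s, s < 5 → t < 5 → s ≤ t → j < 2 →
      σ s j = BBflip (u t j) → (u t j = BB.zero ∨ u t j = BB.one) → False := by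
    intro t j s hs ht hle hj hσs hb
    have ha := acc s t j hs ht hle hj
    rw [hσs, Tcell_flip_false hb] at ha
    exact Bool.noConfusion ha
  by_cases hA : j2 = j3
  · -- Case A: thresholds 3 and 4 use the same column
    rcases COV 4 2 (by omega) (by omega) with ⟨_, m⟩ | ⟨_, m⟩ | ⟨a2, _⟩ | ⟨_, m⟩
    · exact F2 0 j0 2 (by omega) hj0 p0.2 p0.1 (by omega) (by omega) m
    · exact F2 1 j1 2 (by omega) hj1 p1.2 p1.1 (by omega) (by omega) m
    · rcases COV 4 3 (by omega) (by omega) with ⟨_, m⟩ | ⟨_, m⟩ | ⟨_, m⟩ | ⟨a3, _⟩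
      · exact F2 0 j0 3 (by omega) hj0 p0.2 p0.1 (by omega) (by omega) m
      · exact F2 1 j1 3 (by omega) hj1 p1.2 p1.1 (by omega) (by omega) m
      · exact F2 2 j2 3 (by omega) hj2 p2.2 p2.1 (by omega) (by omega) m
      · have hfe : BBflip (u 2 j2) = BBflip (u 3 j3) := by rw [← a2, ← a3, hA]
        exact d23 hA (BBflip_inj p2.1 p3.1 hfe)
    · exact d23 hA ((congrArg (u 2) hA).trans m)
  · by_cases hC : j1 = j2
    · -- Case C: thresholds 2 and 3 use the same column
      rcases COV 3 2 (by omega) (by omega) with ⟨_, m⟩ | ⟨_, m⟩ | ⟨a2, _⟩ | ⟨a, _⟩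
      · exact F2 0 j0 2 (by omega) hj0 p0.2 p0.1 (by omega) (by omega) m
      · exact F2 1 j1 2 (by omega) hj1 p1.2 p1.1 (by omega) (by omega) m
      · rcases COV 3 1 (by omega) (by omega) with ⟨_, m⟩ | ⟨a1, _⟩ | ⟨_, m⟩ | ⟨a, _⟩
        · exact F2 0 j0 1 (by omega) hj0 p0.2 p0.1 (by omega) (by omega) m
        · have hfe : BBflip (u 1 j1) = BBflip (u 2 j2) := by rw [← a1, ← a2, hC]
          exact d12 hC (BBflip_inj p1.1 p2.1 hfe)
        · exact d12 hC ((congrArg (u 1) hC).trans m)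
        · exact ACT 3 j3 3 (by omega) (by omega) (by omega) hj3 a p3.1
      · exact ACT 3 j3 3 (by omega) (by omega) (by omega) hj3 a p3.1
    · -- Case B: thresholds 2 and 4 share a column, 1 and 3 share the other
      have hB : j1 = j3 := by omega
      have hj02 : j0 = j2 := by
        by_contra h02
        have h03 : j0 = j3 := by omega
        have h01 : j0 = j1 := by omega
        exact three_letters p0.1 p1.1 p3.1 (d01 h01) (d03 h03) (d13 hB)
      -- α : σ 4 j3 is active against b3
      rcases COV 4 3 (by omega) (by omega) with ⟨_, m⟩ | ⟨_, m⟩ | ⟨_, m⟩ | ⟨a3, _⟩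
      · exact F2 0 j0 3 (by omega) hj0 p0.2 p0.1 (by omega) (by omega) m
      · exact F2 1 j1 3 (by omega) hj1 p1.2 p1.1 (by omega) (by omega) m
      · exact F2 2 j2 3 (by omega) hj2 p2.2 p2.1 (by omega) (by omega) m
      -- β : σ 3 j2 is active against b2
      rcases COV 3 2 (by omega) (by omega) with ⟨_, m⟩ | ⟨_, m⟩ | ⟨b2a, _⟩ | ⟨a, _⟩
      · exact F2 0 j0 2 (by omega) hj0 p0.2 p0.1 (by omega) (by omega) m
      · exact F2 1 j1 2 (by omega) hj1 p1.2 p1.1 (by omega) (by omega) m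
      swap
      · exact ACT 3 j3 3 (by omega) (by omega) (by omega) hj3 a p3.1
      -- δ : 0 lies in the half of threshold 2
      rcases COV 3 0 (by omega) (by omega) with ⟨a0, _⟩ | ⟨_, M10⟩ | ⟨_, m⟩ | ⟨a, _⟩
      · have hfe : BBflip (u 0 j0) = BBflip (u 2 j2) := by rw [← a0, ← b2a, hj02]
        exact d02 hj02 (BBflip_inj p0.1 p2.1 hfe)
      swap
      · exact d02 hj02 ((congrArg (u 0) hj02).trans m)
      swap
      · exact ACT 3 j3 3 (by omega) (by omega) (by omega) hj3 a p3.1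
      -- ζ : σ 4 j0 is active against b0
      rcases COV 4 0 (by omega) (by omega) with ⟨a0', _⟩ | ⟨a1, _⟩ | ⟨_, m⟩ | ⟨_, m⟩
      swap
      · have hfe : BBflip (u 1 j1) = BBflip (u 3 j3) := by rw [← a1, ← a3, hB]
        exact d13 hB (BBflip_inj p1.1 p3.1 hfe)
      swap
      · exact d02 hj02 ((congrArg (u 0) hj02).trans m)
      swap
      · exact d13 hB ((M10.symm.trans (congrArg (u 0) hB)).trans m)
      -- η : nobody can kill x = 1 at threshold 4
      rcases COV 4 1 (by omega) (by omega) with ⟨_, m⟩ | ⟨a1, _⟩ | ⟨a2', _⟩ | ⟨_, m⟩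
      · exact F2 0 j0 1 (by omega) hj0 p0.2 p0.1 (by omega) (by omega) m
      · have hfe : BBflip (u 1 j1) = BBflip (u 3 j3) := by rw [← a1, ← a3, hB]
        exact d13 hB (BBflip_inj p1.1 p3.1 hfe)
      · have hfe : BBflip (u 0 j0) = BBflip (u 2 j2) := by rw [← a0', ← a2', hj02]
        exact d02 hj02 (BBflip_inj p0.1 p2.1 hfe)
      · exact d13 hB ((congrArg (u 1) hB).trans m)
theorem Gset_implementable_starStar (q n : ℕ) (hq : 2 ≤ q) (hn : 1 ≤ n) :
    Implementable Bstar Bstar n q (Gset q) ↔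
      (if n ≤ 2 then q ≤ 2 * n else q ≤ 2 * n + 1) := by
  rw [natImpl_iff]
  split_ifs with h
  · interval_cases n
    · constructor
      · intro hI
        by_contra hgt
        push_neg at hgt
        exact not_natImpl_1_3 (natImpl_mono (by omega) hI)
      · intro hle
        have hq2 : q = 2 := by omega
        subst hq2
        exact natImpl_1_2
    · constructor
      · intro hI
        by_contra hgt
        push_neg at hgt
        exact not_natImpl_2_5 (natImpl_mono (by omega) hI)
      · intro hle
        exact natImpl_mono (by omega) natImpl_2_4
  · constructor
    · intro hI
      exact natImpl_le n q hI
    · intro hle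
      exact natImpl_mono (by omega) (natImpl_gen n (by omega))
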